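/- The k-linear map Hom_A(P_1, k_ε) → Hom_A(P_2, k_ε), g ↦ g ∘ d_2, has kernel of k-dimension n² and image of k-dimension n². -/

import Mathlib

/-!
Common setting (from the paper "The Anick resolution of the co-unit of the free unitary
quantum group", arXiv:2403.06663):

`k` is a field and `n ≥ 2`.  `S` is the set of `2n²` generators `u∘_{j,i}, u•_{j,i}`,
`(j,i) ∈ {1,…,n}²`, with the involution `*` exchanging `u∘_{j,i}` and `u•_{j,i}`.
Indices are realized `0`-based as elements of `Fin n` (so the index `1` is `fin1 = 0`,
the index `n` is `finN = n-1`, and `σ(i) = n-i+1` is `Fin.rev`).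
-/

namespace UnPlusAnick

/-- A generator: a color (`false` = white `∘`, `true` = black `•`) and a pair of indices. -/
abbrev Gen (n : ℕ) := Bool × Fin n × Fin n

/-- The involution `*` on the generators: it flips the color and keeps the indices. -/
def genStar {n : ℕ} (g : Gen n) : Gen n := (!g.1, g.2)

/-- An `n × n` matrix with entries in the set of generators. -/
abbrev Mat (n : ℕ) := Fin n → Fin n → Gen n

/-- The fundamental matrix `u`, `u_{j,i} = u∘_{j,i}`. -/
def uMat (n : ℕ) : Mat n := fun j i => (false, j, i)

/-- The transpose `vᵀ`. -/
def mT {n : ℕ} (v : Mat n) : Mat n := fun j i => v i j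

/-- The matrix `v^σ`, `(v^σ)_{j,i} = (v_{σ(j),σ(i)})^*`. -/
def mS {n : ℕ} (v : Mat n) : Mat n := fun j i => genStar (v j.rev i.rev)

/-- The matrix `v^δ`, `(v^δ)_{j,i} = (v_{σ(i),σ(j)})^*`; thus `v^δ = (v^σ)ᵀ`. -/
def mD {n : ℕ} (v : Mat n) : Mat n := fun j i => genStar (v i.rev j.rev)

/-- The set `V = {u, uᵀ, u^σ, u^δ}`. -/
def V (n : ℕ) : Set (Mat n) := {uMat n, mT (uMat n), mS (uMat n), mD (uMat n)}

/-- The index `1` of `{1, …, n}`, as the `0`-based element `0` of `Fin n`. -/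
def fin1 (n : ℕ) (hn : 2 ≤ n) : Fin n := ⟨0, by omega⟩

/-- The index `n` of `{1, …, n}`, as the `0`-based element `n - 1` of `Fin n`. -/
def finN (n : ℕ) (hn : 2 ≤ n) : Fin n := ⟨n - 1, by omega⟩

theorem genStar_genStar {n : ℕ} (g : Gen n) : genStar (genStar g) = g := by simp [genStar]

theorem mS_mS {n : ℕ} (v : Mat n) : mS (mS v) = v := by
  funext j i; simp [mS, genStar_genStar]

theorem mD_mD {n : ℕ} (v : Mat n) : mD (mD v) = v := by
  funext j i; simp [mD, genStar_genStar]

theorem mS_mD {n : ℕ} (v : Mat n) : mS (mD v) = mT v := by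
  funext j i; simp [mS, mD, mT, genStar_genStar]

theorem mD_mS {n : ℕ} (v : Mat n) : mD (mS v) = mT v := by
  funext j i; simp [mS, mD, mT, genStar_genStar]

/-- `V` is closed under transposition. -/
theorem V_mT {n : ℕ} {v : Mat n} (hv : v ∈ V n) : mT v ∈ V n := by
  simp only [V, Set.mem_insert_iff, Set.mem_singleton_iff] at hv ⊢
  rcases hv with rfl | rfl | rfl | rfl
  · exact Or.inr (Or.inl rfl)
  · exact Or.inl rfl
  · exact Or.inr (Or.inr (Or.inr rfl))
  · exact Or.inr (Or.inr (Or.inl rfl))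

/-- `V` is closed under `v ↦ v^σ`. -/
theorem V_mS {n : ℕ} {v : Mat n} (hv : v ∈ V n) : mS v ∈ V n := by
  simp only [V, Set.mem_insert_iff, Set.mem_singleton_iff] at hv ⊢
  rcases hv with rfl | rfl | rfl | rfl
  · exact Or.inr (Or.inr (Or.inl rfl))
  · exact Or.inr (Or.inr (Or.inr rfl))
  · exact Or.inl (mS_mS _)
  · exact Or.inr (Or.inl (mS_mD _))

/-- `V` is closed under `v ↦ v^δ`. -/
theorem V_mD {n : ℕ} {v : Mat n} (hv : v ∈ V n) : mD v ∈ V n := by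
  simp only [V, Set.mem_insert_iff, Set.mem_singleton_iff] at hv ⊢
  rcases hv with rfl | rfl | rfl | rfl
  · exact Or.inr (Or.inr (Or.inr rfl))
  · exact Or.inr (Or.inr (Or.inl rfl))
  · exact Or.inr (Or.inl (mD_mS _))
  · exact Or.inl (mD_mD _)

/-! ### Words and the free algebra -/

/-- Words in the generators: the free monoid over the set of generators. -/
abbrev Word (n : ℕ) := FreeMonoid (Gen n)

/-- The free unital associative `k`-algebra on the generators, realized as the monoid algebra
of the free monoid of words; its canonical `k`-basis is the set of words. -/
abbrev FreeAlg (k : Type*) [Field k] (n : ℕ) := MonoidAlgebra k (Word n)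

/-- A word, viewed as a monomial in the free algebra. -/
noncomputable def wd (k : Type*) [Field k] {n : ℕ} (w : Word n) : FreeAlg k n :=
  MonoidAlgebra.of k (Word n) w

/-- The relation `b^v_{j,i} = ∑_{s=1}^{n} v_{j,σ(s)} (v^δ)_{s,σ(i)} − δ_{j,i} · 1`. -/
noncomputable def brel (k : Type*) [Field k] {n : ℕ} (v : Mat n) (j i : Fin n) : FreeAlg k n :=
  (∑ s : Fin n, wd k (FreeMonoid.of (v j s.rev) * FreeMonoid.of (mD v s i.rev)))
    - if j = i then 1 else 0

/-- The set of relations `R = {b^v_{j,i} : v ∈ V, (j,i) ∈ {1,…,n}²}`. -/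
def rels (k : Type*) [Field k] (n : ℕ) : Set (FreeAlg k n) :=
  {x | ∃ v ∈ V n, ∃ j i : Fin n, x = brel k v j i}

/-- `b̃^v = v_{n,n}(v^δ)_{1,1} − ∑_{s=2}^{n} ∑_{t=1}^{n−1} v_{t,σ(s)}(v^δ)_{s,σ(t)} + (n−2)·1`. -/
noncomputable def btil (k : Type*) [Field k] (n : ℕ) (hn : 2 ≤ n) (v : Mat n) : FreeAlg k n :=
  wd k (FreeMonoid.of (v (finN n hn) (finN n hn)) * FreeMonoid.of (mD v (fin1 n hn) (fin1 n hn)))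
    - (∑ s ∈ Finset.univ.filter (fun s : Fin n => s ≠ fin1 n hn),
        ∑ t ∈ Finset.univ.filter (fun t : Fin n => t ≠ finN n hn),
          wd k (FreeMonoid.of (v t s.rev) * FreeMonoid.of (mD v s t.rev)))
    + ((n - 2 : ℕ) : FreeAlg k n)

/-! ### The monomial order and tips -/

/-- The strict order on the generators: every black generator is smaller than every white one;
`u•_{t,s} < u•_{j,i}` iff `(j,i) <` `(t,s)` lexicographically, and `u∘_{t,s} < u∘_{j,i}` iff
`(t,s) < (j,i)` lexicographically. -/
def genLT {n : ℕ} (g h : Gen n) : Prop :=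
  (g.1 = true ∧ h.1 = false) ∨
    (g.1 = true ∧ h.1 = true ∧ toLex h.2 < toLex g.2) ∨
    (g.1 = false ∧ h.1 = false ∧ toLex g.2 < toLex h.2)

/-- The degreewise lexicographic extension of the order on generators to words:
`w ≤ w'` iff `w = w'`, or `w` is shorter than `w'`, or they have the same length and `w`
precedes `w'` lexicographically letter by letter. -/
def wordLE {n : ℕ} (w w' : Word n) : Prop :=
  w = w' ∨ (FreeMonoid.toList w).length < (FreeMonoid.toList w').length ∨
    ((FreeMonoid.toList w).length = (FreeMonoid.toList w').length ∧
      List.Lex genLT (FreeMonoid.toList w) (FreeMonoid.toList w'))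

/-- `IsTip f t`: the word `t` is the `≤`-largest word occurring with nonzero coefficient in
`f`, i.e. `Tip(f) = t`. -/
def IsTip (k : Type*) [Field k] {n : ℕ} (f : FreeAlg k n) (t : Word n) : Prop :=
  f.coeff t ≠ 0 ∧ ∀ w : Word n, f.coeff w ≠ 0 → wordLE w t

/-- `w` divides `w'` (as words in the free monoid). -/
def WDvd {n : ℕ} (w w' : Word n) : Prop := ∃ w₁ w₂ : Word n, w' = w₁ * w * w₂

/-! ### The ideal of relations -/

/-- The two-sided ideal `I` of the free algebra generated by the set of relations `R`. -/
noncomputable def idl (k : Type*) [Field k] (n : ℕ) : TwoSidedIdeal (FreeAlg k n) :=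
  TwoSidedIdeal.span (rels k n)

/-- The set `Tip(I)` of tips of nonzero elements of `I`. -/
def TipSet (k : Type*) [Field k] (n : ℕ) : Set (Word n) :=
  {w | ∃ f : FreeAlg k n, f ∈ idl k n ∧ f ≠ 0 ∧ IsTip k f w}

/-! ### Reductions and ambiguities -/

/-- `φ` is a one-step reduction by `f`: there are fixed words `w₁`, `w₂` such that `φ` maps the
word `w₁ Tip(f) w₂` to `w₁ (Tip(f) − c⁻¹ f) w₂`, where `c` is the leading coefficient of `f`,
and fixes every other word. -/
def IsOneStep (k : Type*) [Field k] {n : ℕ} (f : FreeAlg k n)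
    (φ : FreeAlg k n →ₗ[k] FreeAlg k n) : Prop :=
  f ≠ 0 ∧ ∃ (w₁ w₂ t : Word n), IsTip k f t ∧
    φ (wd k (w₁ * t * w₂)) = wd k w₁ * (wd k t - (f.coeff t)⁻¹ • f) * wd k w₂ ∧
    ∀ w : Word n, w ≠ w₁ * t * w₂ → φ (wd k w) = wd k w

/-- A reduction by a set `G`: a finite composition of one-step reductions by nonzero elements
of `G`. -/
inductive IsReduction (k : Type*) [Field k] {n : ℕ} (G : Set (FreeAlg k n)) :
    (FreeAlg k n →ₗ[k] FreeAlg k n) → Prop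
  | id : IsReduction k G LinearMap.id
  | comp {φ ψ : FreeAlg k n →ₗ[k] FreeAlg k n} {g : FreeAlg k n} (hg : g ∈ G)
      (hφ : IsOneStep k g φ) (hψ : IsReduction k G ψ) : IsReduction k G (φ ∘ₗ ψ)

/-- `(g, g', w₁, w₂)` is an inclusion ambiguity of `G`. -/
def IsInclusionAmbiguity (k : Type*) [Field k] {n : ℕ} (G : Set (FreeAlg k n))
    (g g' : FreeAlg k n) (w₁ w₂ : Word n) : Prop :=
  g ∈ G ∧ g' ∈ G ∧ g ≠ 0 ∧ g' ≠ 0 ∧ g ≠ g' ∧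
    ∃ t t' : Word n, IsTip k g t ∧ IsTip k g' t' ∧ w₁ * t * w₂ = t'

/-- The inclusion ambiguity `(g, g', w₁, w₂)` of `G` resolves. -/
def InclusionAmbiguityResolves (k : Type*) [Field k] {n : ℕ} (G : Set (FreeAlg k n))
    (g g' : FreeAlg k n) (w₁ w₂ : Word n) : Prop :=
  ∀ t t' : Word n, IsTip k g t → IsTip k g' t' →
    ∃ φ₁ φ₂ : FreeAlg k n →ₗ[k] FreeAlg k n, IsReduction k G φ₁ ∧ IsReduction k G φ₂ ∧
      φ₁ (wd k t' - (g'.coeff t')⁻¹ • g') = φ₂ (wd k w₁ * (wd k t - (g.coeff t)⁻¹ • g) * wd k w₂)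

/-- `(g₁, g₂, w₁, w₂)` is an overlap ambiguity of `G`. -/
def IsOverlapAmbiguity (k : Type*) [Field k] {n : ℕ} (G : Set (FreeAlg k n))
    (g₁ g₂ : FreeAlg k n) (w₁ w₂ : Word n) : Prop :=
  g₁ ∈ G ∧ g₂ ∈ G ∧ g₁ ≠ 0 ∧ g₂ ≠ 0 ∧ ¬(w₁ = 1 ∧ w₂ = 1) ∧
    ∃ t₁ t₂ : Word n, IsTip k g₁ t₁ ∧ IsTip k g₂ t₂ ∧ t₁ * w₂ = w₁ * t₂ ∧
      ¬WDvd t₂ w₂ ∧ ¬WDvd t₁ w₁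

/-- The overlap ambiguity `(g₁, g₂, w₁, w₂)` of `G` resolves. -/
def OverlapAmbiguityResolves (k : Type*) [Field k] {n : ℕ} (G : Set (FreeAlg k n))
    (g₁ g₂ : FreeAlg k n) (w₁ w₂ : Word n) : Prop :=
  ∀ t₁ t₂ : Word n, IsTip k g₁ t₁ → IsTip k g₂ t₂ →
    ∃ φ₁ φ₂ : FreeAlg k n →ₗ[k] FreeAlg k n, IsReduction k G φ₁ ∧ IsReduction k G φ₂ ∧
      φ₁ ((wd k t₁ - (g₁.coeff t₁)⁻¹ • g₁) * wd k w₂) = φ₂ (wd k w₁ * (wd k t₂ - (g₂.coeff t₂)⁻¹ • g₂))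

/-! ### Gröbner bases -/

/-- `G` is a Gröbner basis of the two-sided ideal `J` with respect to the order: `G ⊆ J` and
the tip of every nonzero element of `J` is divisible by the tip of some nonzero element
of `G`. -/
def IsGroebner (k : Type*) [Field k] {n : ℕ} (G : Set (FreeAlg k n))
    (J : TwoSidedIdeal (FreeAlg k n)) : Prop :=
  (∀ g ∈ G, g ∈ J) ∧
    ∀ f : FreeAlg k n, f ∈ J → f ≠ 0 → ∀ t : Word n, IsTip k f t →
      ∃ g ∈ G, g ≠ 0 ∧ ∃ tg : Word n, IsTip k g tg ∧ WDvd tg t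

/-- A minimal Gröbner basis: `0 ∉ G` and the tip of no element of `G` divides the tip of a
different element of `G`. -/
def IsMinimalGroebner (k : Type*) [Field k] {n : ℕ} (G : Set (FreeAlg k n))
    (J : TwoSidedIdeal (FreeAlg k n)) : Prop :=
  IsGroebner k G J ∧ (0 : FreeAlg k n) ∉ G ∧
    ∀ g ∈ G, ∀ g' ∈ G, g ≠ g' → ∀ t t' : Word n, IsTip k g t → IsTip k g' t' → ¬WDvd t t'

/-- A reduced Gröbner basis: minimal, every element has leading coefficient `1`, and the tip of
no element of `G` divides a word occurring with nonzero coefficient in a different element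
of `G`. -/
def IsReducedGroebner (k : Type*) [Field k] {n : ℕ} (G : Set (FreeAlg k n))
    (J : TwoSidedIdeal (FreeAlg k n)) : Prop :=
  IsMinimalGroebner k G J ∧ (∀ g ∈ G, ∀ t : Word n, IsTip k g t → g.coeff t = 1) ∧
    ∀ g ∈ G, ∀ g' ∈ G, g ≠ g' → ∀ t : Word n, IsTip k g t →
      ∀ w : Word n, g'.coeff w ≠ 0 → ¬WDvd t w

/-! ### Monoidal ideals -/

/-- A monoidal ideal of the free monoid of words: a set of words containing all multiples of
its elements. -/
def IsMonIdeal {n : ℕ} (M : Set (Word n)) : Prop :=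
  ∀ w ∈ M, ∀ w₁ w₂ : Word n, w₁ * w * w₂ ∈ M

/-- `N` generates `M` as a monoidal ideal: `M` is the smallest monoidal ideal containing `N`. -/
def GeneratesMonIdeal {n : ℕ} (N M : Set (Word n)) : Prop :=
  IsMonIdeal M ∧ N ⊆ M ∧ ∀ M' : Set (Word n), IsMonIdeal M' → N ⊆ M' → M ⊆ M'

/-! ### Chain words -/

/-- `v^{[ℓ]}`: equal to `v` for odd `ℓ` and to `v^δ` for even `ℓ`. -/
def pw {n : ℕ} (l : ℕ) (v : Mat n) : Mat n := if l % 2 = 1 then v else mD v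

/-- The word `v^{(ℓ)}_{j,i}` (for `ℓ ≥ 1`). -/
def chainWord (n : ℕ) (hn : 2 ≤ n) (v : Mat n) (l : ℕ) (j i : Fin n) : Word n :=
  if l = 1 then FreeMonoid.of (v j i.rev)
  else if l % 2 = 0 then
    FreeMonoid.of (v j (finN n hn)) *
      (FreeMonoid.of (mD v (fin1 n hn) (finN n hn)) *
          FreeMonoid.of (v (fin1 n hn) (finN n hn))) ^ ((l - 2) / 2) *
      FreeMonoid.of (mD v (fin1 n hn) i.rev)
  else
    FreeMonoid.of (v j (finN n hn)) *
      (FreeMonoid.of (mD v (fin1 n hn) (finN n hn)) *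
          FreeMonoid.of (v (fin1 n hn) (finN n hn))) ^ ((l - 3) / 2) *
      FreeMonoid.of (mD v (fin1 n hn) (finN n hn)) * FreeMonoid.of (v (fin1 n hn) i.rev)

/-- The set `C_ℓ = {v^{(ℓ)}_{j,i} : v ∈ V, (j,i) ∈ {1,…,n}²}` of `ℓ`-chains. -/
def Cset (n : ℕ) (hn : 2 ≤ n) (l : ℕ) : Set (Word n) :=
  {w | ∃ v ∈ V n, ∃ j i : Fin n, w = chainWord n hn v l j i}

/-! ### The quotient algebra `A = F/I`, the counit and the modules of the resolution -/

/-- The relation identifying each element of `R` with `0`; the induced ring congruence realizes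
the quotient `A = F/I` by the two-sided ideal `I` generated by `R`. -/
def relR (k : Type*) [Field k] (n : ℕ) : FreeAlg k n → FreeAlg k n → Prop :=
  fun a b => a ∈ rels k n ∧ b = 0

/-- The `k`-algebra `A = F/I`. -/
abbrev Aq (k : Type*) [Field k] (n : ℕ) := RingQuot (relR k n)

/-- The quotient map `F → A = F/I`. -/
noncomputable def pr (k : Type*) [Field k] (n : ℕ) : FreeAlg k n →ₐ[k] Aq k n :=
  RingQuot.mkAlgHom k (relR k n)

/-- The class `v_{j,i} + I ∈ A` of a generator. -/
noncomputable def gen (k : Type*) [Field k] {n : ℕ} (v : Mat n) (j i : Fin n) : Aq k n :=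
  pr k n (wd k (FreeMonoid.of (v j i)))

/-- The ring homomorphism `Aᵐᵒᵖ →+* k` induced by `ε` (using the commutativity of `k`). -/
noncomputable def epsOp (k : Type*) [Field k] (n : ℕ) (ε : Aq k n →ₐ[k] k) :
    (Aq k n)ᵐᵒᵖ →+* k where
  toFun a := ε a.unop
  map_one' := by simp
  map_mul' a b := by simp [mul_comm]
  map_zero' := by simp
  map_add' a b := by simp

/-- The right `A`-module `k_ε`: the field `k` with the right `A`-action induced by `ε`,
realized as a left module over the opposite algebra `Aᵐᵒᵖ`. -/
def KE (k : Type*) [Field k] (n : ℕ) (_ε : Aq k n →ₐ[k] k) : Type _ := k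

instance (k : Type*) [Field k] (n : ℕ) (ε : Aq k n →ₐ[k] k) : AddCommGroup (KE k n ε) :=
  inferInstanceAs (AddCommGroup k)

instance (k : Type*) [Field k] (n : ℕ) (ε : Aq k n →ₐ[k] k) : Module k (KE k n ε) :=
  inferInstanceAs (Module k k)

instance (k : Type*) [Field k] (n : ℕ) (ε : Aq k n →ₐ[k] k) : One (KE k n ε) := ⟨(1 : k)⟩

noncomputable instance (k : Type*) [Field k] (n : ℕ) (ε : Aq k n →ₐ[k] k) :
    Module ((Aq k n)ᵐᵒᵖ) (KE k n ε) :=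
  Module.compHom k (epsOp k n ε)

instance (k : Type*) [Field k] (n : ℕ) (ε : Aq k n →ₐ[k] k) :
    SMulCommClass ((Aq k n)ᵐᵒᵖ) k (KE k n ε) :=
  ⟨fun a c x => by
    show epsOp k n ε a • (c • x) = c • (epsOp k n ε a • x)
    rw [smul_smul, smul_smul, mul_comm]⟩

/-- The free right `A`-module `P_ℓ = kC_ℓ ⊗ₖ A` with basis `C_ℓ` (for `ℓ ≥ 1`), realized as a
left module over the opposite algebra `Aᵐᵒᵖ`. -/
abbrev Pmod (k : Type*) [Field k] (n : ℕ) (hn : 2 ≤ n) (l : ℕ) :=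
  ↥(Cset n hn l) →₀ Aq k n

/-- The element `v^{(ℓ)}_{j,i} ⊗ a` of `P_ℓ`. -/
noncomputable def bas (k : Type*) [Field k] (n : ℕ) (hn : 2 ≤ n) (l : ℕ) (v : Mat n)
    (hv : v ∈ V n) (j i : Fin n) (a : Aq k n) : Pmod k n hn l :=
  Finsupp.single ⟨chainWord n hn v l j i, ⟨v, hv, j, i, rfl⟩⟩ a

/-- Pre-composition with a homomorphism of right `A`-modules, as the `k`-linear map
`Hom_A(N, k_ε) → Hom_A(M, k_ε)`, `g ↦ g ∘ d`. -/
noncomputable def homMap (k : Type*) [Field k] {n : ℕ} (ε : Aq k n →ₐ[k] k) {M N : Type*}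
    [AddCommMonoid M] [AddCommMonoid N] [Module ((Aq k n)ᵐᵒᵖ) M] [Module ((Aq k n)ᵐᵒᵖ) N]
    (d : M →ₗ[(Aq k n)ᵐᵒᵖ] N) :
    (N →ₗ[(Aq k n)ᵐᵒᵖ] KE k n ε) →ₗ[k] (M →ₗ[(Aq k n)ᵐᵒᵖ] KE k n ε) where
  toFun g := g.comp d
  map_add' _ _ := LinearMap.ext fun _ => rfl
  map_smul' _ _ := LinearMap.ext fun _ => rfl

/-- The right-hand side of the defining formula for `d₂` on the basis element
`v^{(2)}_{j,i} ⊗ 1`. -/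
noncomputable def d2RHS (k : Type*) [Field k] (n : ℕ) (hn : 2 ≤ n) (v : Mat n)
    (hv : v ∈ V n) (j i : Fin n) : Pmod k n hn 1 :=
  (∑ s : Fin n, bas k n hn 1 v hv j s (gen k (mD v) s i.rev))
    + bas k n hn 1 (mD v) (V_mD hv) j.rev i 1
    - (if j = finN n hn ∧ i = finN n hn then
        ∑ s ∈ Finset.univ.filter (fun s : Fin n => s ≠ fin1 n hn),
          ((∑ t : Fin n, bas k n hn 1 v hv t s (gen k (mD v) s t.rev))
            + bas k n hn 1 (mD v) (V_mD hv) s s.rev 1)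
      else 0)

/-- The right-hand side of the defining formula for `d_ℓ`, `ℓ ≥ 3`, on the basis element
`v^{(ℓ)}_{j,i} ⊗ 1`. -/
noncomputable def dTail (k : Type*) [Field k] (n : ℕ) (hn : 2 ≤ n) (l : ℕ) (v : Mat n)
    (hv : v ∈ V n) (j i : Fin n) : Pmod k n hn (l - 1) :=
  (∑ s : Fin n, bas k n hn (l - 1) v hv j s (gen k (pw l v) s i.rev))
    + bas k n hn (l - 1) (mD v) (V_mD hv) j.rev i ((-1 : Aq k n) ^ l)
    + (if j = finN n hn then
        ((bas k n hn (l - 1) (mT v) (V_mT hv) (fin1 n hn) (fin1 n hn)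
              (gen k (pw l (mT v)) i.rev (finN n hn))
            + (if l = 3 then
                ∑ s ∈ Finset.univ.filter (fun s : Fin n => s ≠ fin1 n hn ∧ s ≠ finN n hn),
                  bas k n hn (l - 1) (mT v) (V_mT hv) s s (gen k (pw l (mT v)) i.rev (finN n hn))
              else 0))
          - (if i = finN n hn then
              (∑ s : Fin n, bas k n hn (l - 1) (mT v) (V_mT hv) (fin1 n hn) s
                  (gen k (pw l (mT v)) s (finN n hn)))
                + bas k n hn (l - 1) (mS v) (V_mS hv) (finN n hn) (fin1 n hn) ((-1 : Aq k n) ^ l)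
            else 0))
      else 0)
    + (if j = fin1 n hn ∧ i = finN n hn then
        bas k n hn (l - 1) (mS v) (V_mS hv) (fin1 n hn) (fin1 n hn) ((-1 : Aq k n) ^ l)
          + (if l = 3 then
              ∑ s ∈ Finset.univ.filter (fun s : Fin n => s ≠ fin1 n hn ∧ s ≠ finN n hn),
                bas k n hn (l - 1) (mS v) (V_mS hv) s s ((-1 : Aq k n) ^ l)
            else 0)
      else 0)

/-- The system of identities from STATEMENT 14, for a fixed `v ∈ V`. -/
noncomputable def cond14 (k : Type*) [Field k] {n : ℕ} (hn : 2 ≤ n) (ε : Aq k n →ₐ[k] k)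
    (g : Pmod k n hn 1 →ₗ[(Aq k n)ᵐᵒᵖ] KE k n ε) (v : Mat n) (hv : v ∈ V n) : Prop :=
  ∀ j i : Fin n, g (bas k n hn 1 (mS v) (V_mS hv) j i 1) = -g (bas k n hn 1 v hv i j 1)

/-- The system of identities (1)–(4) from STATEMENT 16, for a fixed `v ∈ V`. -/
noncomputable def cond16 (k : Type*) [Field k] {n : ℕ} (hn : 2 ≤ n) (ε : Aq k n →ₐ[k] k)
    (l : ℕ) (g : Pmod k n hn (l - 1) →ₗ[(Aq k n)ᵐᵒᵖ] KE k n ε) (v : Mat n)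
    (hv : v ∈ V n) : Prop :=
  (∀ j i : Fin n, (j, i) ≠ (fin1 n hn, fin1 n hn) →
      g (bas k n hn (l - 1) (mT v) (V_mT hv) j i 1) =
        -(((-1 : k) ^ l) • g (bas k n hn (l - 1) (mS v) (V_mS hv) j.rev i.rev 1))
          - (if j = finN n hn ∧ i = finN n hn then
              g (bas k n hn (l - 1) v hv (fin1 n hn) (fin1 n hn) 1)
                + (if l = 3 then
                    ∑ s ∈ Finset.univ.filter (fun s : Fin n => s ≠ fin1 n hn ∧ s ≠ finN n hn),
                      g (bas k n hn (l - 1) v hv s s 1)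
                  else 0)
            else 0)) ∧
  (∀ j i : Fin n, (j, i) ≠ (fin1 n hn, fin1 n hn) →
      g (bas k n hn (l - 1) (mD v) (V_mD hv) j i 1) =
        -(((-1 : k) ^ l) • g (bas k n hn (l - 1) v hv j.rev i.rev 1))
          - (if j = finN n hn ∧ i = finN n hn then
              g (bas k n hn (l - 1) (mS v) (V_mS hv) (fin1 n hn) (fin1 n hn) 1)
                + (if l = 3 then
                    ∑ s ∈ Finset.univ.filter (fun s : Fin n => s ≠ fin1 n hn ∧ s ≠ finN n hn),
                      g (bas k n hn (l - 1) (mS v) (V_mS hv) s s 1)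
                  else 0)
            else 0)) ∧
  (g (bas k n hn (l - 1) (mD v) (V_mD hv) (fin1 n hn) (fin1 n hn) 1) =
      -(((-1 : k) ^ l) • g (bas k n hn (l - 1) (mT v) (V_mT hv) (fin1 n hn) (fin1 n hn) 1))
        - ((-1 : k) ^ l) • g (bas k n hn (l - 1) v hv (finN n hn) (finN n hn) 1)
        + (if l = 3 then
            ∑ s ∈ Finset.univ.filter (fun s : Fin n => s ≠ fin1 n hn ∧ s ≠ finN n hn),
              g (bas k n hn (l - 1) (mS v) (V_mS hv) s s 1)
          else 0)) ∧
  (g (bas k n hn (l - 1) (mS v) (V_mS hv) (finN n hn) (finN n hn) 1) =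
      -(if l = 3 then
          ∑ s ∈ Finset.univ.filter (fun s : Fin n => s ≠ fin1 n hn ∧ s ≠ finN n hn),
            g (bas k n hn (l - 1) (mS v) (V_mS hv) s s 1)
        else 0)
        + ((-1 : k) ^ l) • (g (bas k n hn (l - 1) v hv (finN n hn) (finN n hn) 1)
            + (if l = 3 then
                ∑ s ∈ Finset.univ.filter (fun s : Fin n => s ≠ fin1 n hn ∧ s ≠ finN n hn),
                  g (bas k n hn (l - 1) v hv s s 1)
              else 0)))

/-!
Via the basis `C₁ ≅ S` of `P₁`, a homomorphism `g : P₁ → k_ε` is a function `y : S → k`.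
Since `ε` vanishes on off-diagonal generators, `(g ∘ d₂)(v^{(2)}_{j,i})` equals
`y(v_{j,i}) + y((v_{i,j})^*)`, corrected at `(j,i) = (n,n)` by the sum of the same expressions at
the other diagonal places. So `g ∘ d₂ = 0` exactly when `y(u∘_{j,i}) + y(u•_{i,j}) = 0` for all
`(j,i)`: `n²` independent linear conditions on the `2n²`-dimensional space `k^S`. The kernel thus
has dimension `n²`, and by rank–nullity so has the image.
-/

theorem eq_zero_of_forall_sub_ite_sum_eq_zero {ι κ M : Type*} [AddCommGroup M] {f : ι → M}
    {P : ι → Prop} [DecidablePred P] {S : Finset κ} {e : κ → ι} (he : ∀ s ∈ S, ¬P (e s))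
    (h : ∀ i, f i - (if P i then ∑ s ∈ S, f (e s) else 0) = 0) (i : ι) : f i = 0 := by
  have off : ∀ i, ¬P i → f i = 0 := fun i hi => by simpa [hi] using h i
  by_cases hi : P i
  · simpa [hi, Finset.sum_eq_zero fun s hs => off _ (he s hs)] using h i
  · exact off i hi

section Generators

variable {n : ℕ}

def genStarSwap (c : Gen n) : Gen n := (!c.1, c.2.2, c.2.1)

theorem genStar_apply_swap {v : Mat n} (hv : v ∈ V n) (j i : Fin n) :
    genStar (v i j) = genStarSwap (v j i) := by
  simp only [V, Set.mem_insert_iff, Set.mem_singleton_iff] at hv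
  rcases hv with rfl | rfl | rfl | rfl <;> rfl

def starSwapAdd {M : Type*} [Add M] (y : Gen n → M) (c : Gen n) : M := y c + y (genStarSwap c)

/-- The white generators `u∘_{j,i}` meet every orbit of `genStarSwap`. -/
def whiteStarSwapAdd (R M : Type*) [Semiring R] [AddCommMonoid M] [Module R M] :
    (Gen n → M) →ₗ[R] (Fin n × Fin n → M) where
  toFun y p := starSwapAdd y (false, p.1, p.2)
  map_add' y y' := by ext; simp only [starSwapAdd, Pi.add_apply]; abel
  map_smul' r y := by ext; simp [starSwapAdd, smul_add]

theorem whiteStarSwapAdd_surjective (R M : Type*) [Semiring R] [AddCommMonoid M] [Module R M] :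
    Function.Surjective (whiteStarSwapAdd (n := n) R M) := by
  intro f
  refine ⟨fun c => if c.1 then 0 else f (c.2.1, c.2.2), ?_⟩
  ext p
  simp [whiteStarSwapAdd, starSwapAdd, genStarSwap]

theorem whiteStarSwapAdd_eq_zero_iff (R M : Type*) [Semiring R] [AddCommMonoid M] [Module R M]
    (y : Gen n → M) : whiteStarSwapAdd R M y = 0 ↔ starSwapAdd y = 0 := by
  refine ⟨fun h => funext ?_, fun h => funext fun p => congrFun h _⟩
  rintro ⟨_ | _, j, i⟩
  · exact congrFun h (j, i)
  · exact (add_comm _ _).trans (congrFun h (i, j))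

end Generators

section Chains

variable {n : ℕ} (hn : 2 ≤ n)

theorem chainWord_one (v : Mat n) (j i : Fin n) :
    chainWord n hn v 1 j i = FreeMonoid.of (v j i.rev) := by simp [chainWord]

theorem of_mem_Cset_one : ∀ c : Gen n, FreeMonoid.of c ∈ Cset n hn 1
  | (false, j, i) => ⟨uMat n, Or.inl rfl, j, i.rev, by rw [chainWord_one, Fin.rev_rev]; rfl⟩
  | (true, j, i) => ⟨mS (uMat n), Or.inr (Or.inr (Or.inl rfl)), j.rev, i, by
      rw [chainWord_one]; simp [mS, uMat, genStar]⟩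

theorem exists_eq_of_mem_Cset_one {w : Word n} (hw : w ∈ Cset n hn 1) :
    ∃ c : Gen n, FreeMonoid.of c = w := by
  obtain ⟨v, -, j, i, rfl⟩ := hw
  exact ⟨v j i.rev, (chainWord_one hn v j i).symm⟩

noncomputable def genEquivCsetOne : Gen n ≃ Cset n hn 1 :=
  Equiv.ofBijective (fun c => ⟨FreeMonoid.of c, of_mem_Cset_one hn c⟩)
    ⟨fun _ _ h => FreeMonoid.of_injective (congrArg Subtype.val h),
      fun w => (exists_eq_of_mem_Cset_one hn w.2).imp fun _ h => Subtype.ext h⟩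

end Chains

section Modules

variable (k : Type*) [Field k] {n : ℕ} (hn : 2 ≤ n)

theorem bas_eq_op_smul (l : ℕ) (v : Mat n) (hv : v ∈ V n) (j i : Fin n) (a : Aq k n) :
    bas k n hn l v hv j i a = MulOpposite.op a • bas k n hn l v hv j i 1 := by
  simp [bas, Finsupp.smul_single]

theorem Pmod_hom_ext {l : ℕ} {M : Type*} [AddCommMonoid M] [Module (Aq k n)ᵐᵒᵖ M]
    {f f' : Pmod k n hn l →ₗ[(Aq k n)ᵐᵒᵖ] M}
    (h : ∀ (v : Mat n) (hv : v ∈ V n) (j i : Fin n),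
      f (bas k n hn l v hv j i 1) = f' (bas k n hn l v hv j i 1)) : f = f' := by
  refine Finsupp.lhom_ext fun ⟨w, v, hv, j, i, hw⟩ a => ?_
  subst hw
  change f (bas k n hn l v hv j i a) = f' (bas k n hn l v hv j i a)
  rw [bas_eq_op_smul, map_smul, map_smul, h]

noncomputable def p1Basis : Module.Basis (Gen n) (Aq k n)ᵐᵒᵖ (Pmod k n hn 1) :=
  Module.Basis.ofRepr (Finsupp.domLCongr (genEquivCsetOne hn).symm ≪≫ₗ
    Finsupp.mapRange.linearEquiv (MulOpposite.opLinearEquiv (Aq k n)ᵐᵒᵖ))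

theorem p1Basis_apply (c : Gen n) :
    p1Basis k hn c = Finsupp.single ⟨FreeMonoid.of c, of_mem_Cset_one hn c⟩ 1 := by
  simp [p1Basis]; rfl

theorem bas_one_eq (v : Mat n) (hv : v ∈ V n) (j i : Fin n) :
    bas k n hn 1 v hv j i 1 = p1Basis k hn (v j i.rev) := by
  rw [p1Basis_apply]
  exact congrArg (Finsupp.single · 1) (Subtype.ext (chainWord_one hn v j i))

end Modules

section Values

variable {k : Type*} [Field k] {n : ℕ} (hn : 2 ≤ n) {ε : Aq k n →ₐ[k] k}
  (hε : ∀ v ∈ V n, ∀ j i : Fin n, ε (gen k v j i) = if j = i then 1 else 0)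

theorem apply_bas_one (g : Pmod k n hn 1 →ₗ[(Aq k n)ᵐᵒᵖ] KE k n ε) (v : Mat n) (hv : v ∈ V n)
    (j i : Fin n) (a : Aq k n) :
    g (bas k n hn 1 v hv j i a) = ε a • g (p1Basis k hn (v j i.rev)) := by
  rw [bas_eq_op_smul, map_smul, bas_one_eq]
  rfl

include hε in
theorem apply_d2RHS (g : Pmod k n hn 1 →ₗ[(Aq k n)ᵐᵒᵖ] KE k n ε) (v : Mat n) (hv : v ∈ V n)
    (j i : Fin n) :
    g (d2RHS k n hn v hv j i) =
      starSwapAdd (fun c => g (p1Basis k hn c)) (v j i)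
        - if j = finN n hn ∧ i = finN n hn then
            ∑ s ∈ Finset.univ.filter (fun s : Fin n => s ≠ fin1 n hn),
              starSwapAdd (fun c => g (p1Basis k hn c)) (v s.rev s.rev)
          else 0 := by
  have hδ : ∀ a b, ε (gen k (mD v) a b) = if a = b then 1 else 0 := hε _ (V_mD hv)
  have hmD : ∀ a b, mD v a b = genStarSwap (v a.rev b.rev) := fun a b =>
    genStar_apply_swap hv a.rev b.rev
  -- `ε` kills the off-diagonal generators, so every inner sum of `d2RHS` collapses to one term.
  unfold d2RHS starSwapAdd
  rw [map_sub g, map_add g, map_sum g, apply_ite g, map_zero]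
  simp only [apply_bas_one, hδ, map_sum g, map_add g, map_one, one_smul, ite_smul, zero_smul, hmD,
    Fin.rev_rev]
  simp only [Finset.sum_ite_eq', Finset.mem_univ, if_true, Fin.rev_rev]
  simp only [← Fin.rev_eq_iff, Finset.sum_ite_eq, Finset.mem_univ, if_true]

theorem rev_eq_finN_iff {s : Fin n} : s.rev = finN n hn ↔ s = fin1 n hn := by
  simp [Fin.ext_iff, fin1, finN, Fin.val_rev]
  omega

include hε in
theorem homMap_eq_zero_iff (d2 : Pmod k n hn 2 →ₗ[(Aq k n)ᵐᵒᵖ] Pmod k n hn 1)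
    (hd2 : ∀ (v : Mat n) (hv : v ∈ V n) (j i : Fin n),
      d2 (bas k n hn 2 v hv j i 1) = d2RHS k n hn v hv j i)
    (g : Pmod k n hn 1 →ₗ[(Aq k n)ᵐᵒᵖ] KE k n ε) :
    homMap k ε d2 g = 0 ↔ starSwapAdd (fun c => g (p1Basis k hn c)) = 0 := by
  set y : Gen n → KE k n ε := fun c => g (p1Basis k hn c)
  have hcomp : ∀ v hv j i, homMap k ε d2 g (bas k n hn 2 v hv j i 1) =
      starSwapAdd y (v j i) - if j = finN n hn ∧ i = finN n hn then
        ∑ s ∈ Finset.univ.filter (fun s : Fin n => s ≠ fin1 n hn), starSwapAdd y (v s.rev s.rev)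
      else 0 := fun v hv j i => (congrArg g (hd2 v hv j i)).trans (apply_d2RHS hn hε g v hv j i)
  constructor
  · intro h
    have hu (p : Fin n × Fin n) : starSwapAdd y (uMat n p.1 p.2) -
        (if p.1 = finN n hn ∧ p.2 = finN n hn then
          ∑ s ∈ Finset.univ.filter (fun s : Fin n => s ≠ fin1 n hn),
            starSwapAdd y (uMat n s.rev s.rev) else 0) = 0 :=
      (hcomp (uMat n) (Or.inl rfl) p.1 p.2).symm.trans (LinearMap.congr_fun h _)
    refine (whiteStarSwapAdd_eq_zero_iff k (KE k n ε) y).mp (funext fun ⟨j, i⟩ => ?_)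
    have hoff : ∀ s ∈ Finset.univ.filter (fun s : Fin n => s ≠ fin1 n hn),
        ¬(s.rev = finN n hn ∧ s.rev = finN n hn) := fun s hs h =>
      (Finset.mem_filter.mp hs).2 ((rev_eq_finN_iff hn).mp h.1)
    exact eq_zero_of_forall_sub_ite_sum_eq_zero
      (f := fun p : Fin n × Fin n => starSwapAdd y (uMat n p.1 p.2))
      (P := fun p => p.1 = finN n hn ∧ p.2 = finN n hn) (e := fun s : Fin n => (s.rev, s.rev))
      hoff hu (j, i)
  · intro h
    refine Pmod_hom_ext k hn fun v hv j i => ?_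
    simp [hcomp, h]

include hε in
theorem ker_homMap_eq (d2 : Pmod k n hn 2 →ₗ[(Aq k n)ᵐᵒᵖ] Pmod k n hn 1)
    (hd2 : ∀ (v : Mat n) (hv : v ∈ V n) (j i : Fin n),
      d2 (bas k n hn 2 v hv j i 1) = d2RHS k n hn v hv j i) :
    LinearMap.ker (homMap k ε d2) =
      LinearMap.ker
        (whiteStarSwapAdd k (KE k n ε) ∘ₗ ((p1Basis k hn).constr k).symm.toLinearMap) := by
  ext g
  rw [LinearMap.mem_ker, LinearMap.mem_ker, homMap_eq_zero_iff hn hε d2 hd2]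
  exact (whiteStarSwapAdd_eq_zero_iff k _ _).symm

end Values

section Dimension

variable {k : Type*} [Field k] {n : ℕ} (hn : 2 ≤ n) (ε : Aq k n →ₐ[k] k)

instance (ι : Type*) [Fintype ι] : FiniteDimensional k (ι → KE k n ε) :=
  inferInstanceAs (FiniteDimensional k (ι → k))

theorem finrank_fun_KE (ι : Type*) [Fintype ι] :
    Module.finrank k (ι → KE k n ε) = Fintype.card ι :=
  Module.finrank_fintype_fun_eq_card k

instance : FiniteDimensional k (Pmod k n hn 1 →ₗ[(Aq k n)ᵐᵒᵖ] KE k n ε) :=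
  ((p1Basis k hn).constr k).finiteDimensional

theorem finrank_hom_Pmod_one :
    Module.finrank k (Pmod k n hn 1 →ₗ[(Aq k n)ᵐᵒᵖ] KE k n ε) = 2 * n ^ 2 := by
  rw [← ((p1Basis k hn).constr k).finrank_eq, finrank_fun_KE]
  simp [Fintype.card_prod, sq]

end Dimension

theorem statement_15 (k : Type*) [Field k] (n : ℕ) (hn : 2 ≤ n)
    (ε : Aq k n →ₐ[k] k)
    (hε : ∀ v ∈ V n, ∀ j i : Fin n, ε (gen k v j i) = if j = i then 1 else 0)
    (d2 : Pmod k n hn 2 →ₗ[(Aq k n)ᵐᵒᵖ] Pmod k n hn 1)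
    (hd2 : ∀ (v : Mat n) (hv : v ∈ V n) (j i : Fin n),
      d2 (bas k n hn 2 v hv j i 1) = d2RHS k n hn v hv j i) :
    Module.rank k (LinearMap.ker (homMap k ε d2)) = ((n ^ 2 : ℕ) : Cardinal) ∧
      Module.rank k (LinearMap.range (homMap k ε d2)) = ((n ^ 2 : ℕ) : Cardinal) := by
  set Φ := whiteStarSwapAdd k (KE k n ε) ∘ₗ ((p1Basis k hn).constr k).symm.toLinearMap
  have hΦ_range : Module.finrank k (LinearMap.range Φ) = n ^ 2 := by
    rw [LinearMap.range_eq_top_of_surjective Φ ((whiteStarSwapAdd_surjective k _).comp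
      ((p1Basis k hn).constr k).symm.surjective), finrank_top, finrank_fun_KE]
    simp [sq]
  have hΦ_nullity := Φ.finrank_range_add_finrank_ker
  have h_nullity := (homMap k ε d2).finrank_range_add_finrank_ker
  rw [finrank_hom_Pmod_one, ← ker_homMap_eq hn hε d2 hd2] at hΦ_nullity
  rw [finrank_hom_Pmod_one] at h_nullity
  simp only [← Module.finrank_eq_rank, Nat.cast_inj]
  omega
end UnPlusAnick
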